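/- arXiv:1509.02963 — 2 statements merged into one kernel-verified Lean document; each statement's English description precedes it below -/
import Mathlib

section
/- Edge ordering configurations are geometric: let F be a forest in a finite connected graph G, and order and orient the edges not in F as e_1 < e_2 < ... < e_h. Orient each cycle C of G according to (the orientation of) the smallest edge among e_1, ..., e_h contained in C. Then there exists a vector w in the cycle space with ⟨w, C⟩ > 0 for every oriented cycle vector C of this configuration. -/
open scoped Classical

variable {V E : Type} [Fintype V] [Fintype E] [DecidableEq V] [DecidableEq E]

/-- Reachability between vertices using (undirected) edges from the set `A`. -/
def ReachIn (ι : E → V × V) (A : Set E) (a b : V) : Prop :=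
  Relation.ReflTransGen (fun x y => ∃ e ∈ A, ι e = (x, y) ∨ ι e = (y, x)) a b

/-- The graph with edge set `A` (on all of `V`) is connected. -/
def Conn (ι : E → V × V) (A : Set E) : Prop := ∀ a b : V, ReachIn ι A a b

/-- `C : E → ℤ` is the signed indicator vector of a (simple, directed) cycle:
entries in `{-1,0,1}`, nonempty support, zero boundary, every vertex meets
0 or 2 support edges, and the support is connected. -/
def IsCycleVec (ι : E → V × V) (C : E → ℤ) : Prop :=
  (∀ e, C e = 0 ∨ C e = 1 ∨ C e = -1) ∧
  (∃ e, C e ≠ 0) ∧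
  (∀ v : V, ∑ e : E, C e *
      ((if (ι e).2 = v then 1 else 0) - (if (ι e).1 = v then 1 else 0)) = 0) ∧
  (∀ v : V,
    (Finset.univ.filter fun e => C e ≠ 0 ∧ ((ι e).1 = v ∨ (ι e).2 = v)).card = 0 ∨
    (Finset.univ.filter fun e => C e ≠ 0 ∧ ((ι e).1 = v ∨ (ι e).2 = v)).card = 2) ∧
  (∀ a b : V, (∃ e, C e ≠ 0 ∧ ((ι e).1 = a ∨ (ι e).2 = a)) →
    (∃ e, C e ≠ 0 ∧ ((ι e).1 = b ∨ (ι e).2 = b)) →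
    ReachIn ι {e | C e ≠ 0} a b)

/-- The standard basis vector of an edge in the real edge space. -/
noncomputable def edgeVec (f : E) : EuclideanSpace ℝ E := EuclideanSpace.single f 1

/-- The real vector of an integral cycle vector. -/
def cycVecR (C : E → ℤ) : EuclideanSpace ℝ E := WithLp.toLp 2 (fun e => ((C e : ℝ)))

/-- The cycle space `H₁(G,ℝ)`: the span of the signed cycle vectors. -/
noncomputable def cycleSpace (ι : E → V × V) : Submodule ℝ (EuclideanSpace ℝ E) :=
  Submodule.span ℝ {x | ∃ C : E → ℤ, IsCycleVec ι C ∧ x = cycVecR C}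

/-- `π(f)`: the orthogonal projection of the edge basis vector onto the cycle space. -/
noncomputable def projCyc (ι : E → V × V) (f : E) : EuclideanSpace ℝ E :=
  (Submodule.orthogonalProjectionOnto (cycleSpace ι) (edgeVec f) : EuclideanSpace ℝ E)

/-!
Take `w = ∑ᵢ 2⁻ⁱ π(eᵢ)`. Since `π` is self-adjoint and fixes every cycle vector `C`,
`⟪C, π(eᵢ)⟫ = C(eᵢ)`, so `⟪C, w⟫ = ∑ᵢ 2⁻ⁱ C(eᵢ)`. The coefficients are `≥ -1` and the first
nonzero one is `1`; since a sum `∑ⱼ 2⁻ʲ cⱼ` with all `cⱼ ≥ -1` exceeds `-2`, peeling off leading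
zero coefficients shows that this sum is positive.
-/

open scoped RealInnerProductSpace

section HalfPowerSums

lemma sum_half_pow_mul_fin_succ {n : ℕ} (c : Fin (n + 1) → ℝ) :
    ∑ j : Fin (n + 1), (1 / 2 : ℝ) ^ (j : ℕ) * c j =
      c 0 + 1 / 2 * ∑ j : Fin n, (1 / 2 : ℝ) ^ (j : ℕ) * c j.succ := by
  rw [Fin.sum_univ_succ, Finset.mul_sum]
  simp only [Fin.val_zero, pow_zero, one_mul, Fin.val_succ, pow_succ]
  congr 1
  exact Finset.sum_congr rfl fun j _ => by ring

lemma neg_two_lt_sum_half_pow_mul {n : ℕ} (c : Fin n → ℝ) (hc : ∀ j, -1 ≤ c j) :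
    -2 < ∑ j : Fin n, (1 / 2 : ℝ) ^ (j : ℕ) * c j := by
  induction n with
  | zero => simp
  | succ n ih =>
    rw [sum_half_pow_mul_fin_succ]
    linarith [hc 0, ih (fun j => c j.succ) fun j => hc j.succ]

lemma sum_half_pow_mul_pos {n : ℕ} (c : Fin n → ℝ) (hc : ∀ j, -1 ≤ c j)
    (hne : ∃ i, c i ≠ 0) (hfirst : ∀ i, c i ≠ 0 → (∀ j < i, c j = 0) → c i = 1) :
    0 < ∑ j : Fin n, (1 / 2 : ℝ) ^ (j : ℕ) * c j := by
  induction n with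
  | zero => exact (hne.choose).elim0
  | succ n ih =>
    rw [sum_half_pow_mul_fin_succ]
    have htail := neg_two_lt_sum_half_pow_mul (fun j => c j.succ) fun j => hc j.succ
    by_cases h0 : c 0 = 0
    · have hne' : ∃ i : Fin n, c i.succ ≠ 0 := by
        obtain ⟨i, hi⟩ := hne
        cases i using Fin.cases with
        | zero => exact absurd h0 hi
        | succ i => exact ⟨i, hi⟩
      have hfirst' : ∀ i : Fin n, c i.succ ≠ 0 → (∀ j < i, c j.succ = 0) → c i.succ = 1 := by
        refine fun i hi hlt => hfirst i.succ hi fun j hj => ?_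
        cases j using Fin.cases with
        | zero => exact h0
        | succ j => exact hlt j (Fin.succ_lt_succ_iff.mp hj)
      linarith [ih (fun j => c j.succ) (fun j => hc j.succ) hne' hfirst']
    · have h1 : c 0 = 1 := hfirst 0 h0 fun j hj => absurd hj (Fin.not_lt_zero j)
      linarith

end HalfPowerSums

section CycleSpace

omit [Fintype V]

variable (ι : E → V × V)

omit [DecidableEq E] in
lemma cycVecR_mem_cycleSpace {C : E → ℤ} (hC : IsCycleVec ι C) : cycVecR C ∈ cycleSpace ι :=
  Submodule.subset_span ⟨C, hC, rfl⟩

lemma projCyc_mem_cycleSpace (f : E) : projCyc ι f ∈ cycleSpace ι :=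
  Submodule.coe_mem _

lemma inner_projCyc_of_mem {v : EuclideanSpace ℝ E} (hv : v ∈ cycleSpace ι) (f : E) :
    ⟪v, projCyc ι f⟫ = v f := by
  have hproj := (cycleSpace ι).inner_orthogonalProjectionOnto_eq_of_mem_left ⟨v, hv⟩ (edgeVec f)
  rw [Submodule.coe_inner] at hproj
  rw [projCyc, hproj, edgeVec, EuclideanSpace.inner_single_right]
  simp

omit [DecidableEq E] in
lemma inner_cycVecR (C : E → ℤ) (w : EuclideanSpace ℝ E) :
    ⟪cycVecR C, w⟫ = ∑ e, (C e : ℝ) * w e := by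
  simp [cycVecR, PiLp.inner_apply, mul_comm]

noncomputable def orderingWeight {h : ℕ} (ord : Fin h → E) : EuclideanSpace ℝ E :=
  ∑ i : Fin h, (1 / 2 : ℝ) ^ (i : ℕ) • projCyc ι (ord i)

lemma orderingWeight_mem_cycleSpace {h : ℕ} (ord : Fin h → E) :
    orderingWeight ι ord ∈ cycleSpace ι :=
  Submodule.sum_mem _ fun i _ => Submodule.smul_mem _ _ (projCyc_mem_cycleSpace ι (ord i))

lemma inner_orderingWeight_of_mem {v : EuclideanSpace ℝ E} (hv : v ∈ cycleSpace ι)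
    {h : ℕ} (ord : Fin h → E) :
    ⟪v, orderingWeight ι ord⟫ = ∑ i : Fin h, (1 / 2 : ℝ) ^ (i : ℕ) * v (ord i) := by
  simp only [orderingWeight, inner_sum, real_inner_smul_right, inner_projCyc_of_mem ι hv]

end CycleSpace

theorem edge_ordering_is_geometric_general (ι : E → V × V)
    (h : ℕ) (ord : Fin h → E)
    (hF : ∀ C : E → ℤ, IsCycleVec ι C → ∃ i, C (ord i) ≠ 0) :
    ∃ w : EuclideanSpace ℝ E, w ∈ cycleSpace ι ∧
      ∀ C : E → ℤ, IsCycleVec ι C →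
        (∀ i : Fin h, C (ord i) ≠ 0 → (∀ j : Fin h, j < i → C (ord j) = 0) →
          C (ord i) = 1) →
        0 < ∑ e : E, (C e : ℝ) * w e := by
  refine ⟨orderingWeight ι ord, orderingWeight_mem_cycleSpace ι ord, fun C hC hsign => ?_⟩
  rw [← inner_cycVecR, inner_orderingWeight_of_mem ι (cycVecR_mem_cycleSpace ι hC)]
  refine sum_half_pow_mul_pos _ (fun i => ?_) ?_ fun i hi hlt => ?_
  · rcases hC.1 (ord i) with he | he | he <;> simp [cycVecR, he]
  · obtain ⟨i, hi⟩ := hF C hC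
    exact ⟨i, by simpa [cycVecR] using hi⟩
  · have hlt' : ∀ j < i, C (ord j) = 0 := fun j hj => by simpa [cycVecR] using hlt j hj
    simpa [cycVecR] using hsign i (by simpa [cycVecR] using hi) hlt'

/-- edge ordering configurations are geometric. If the edges outside the
forest `F` are ordered (and oriented) as `ord 0 < ord 1 < …`, and every cycle is oriented
according to its smallest edge outside `F` (i.e. has coefficient `+1` there), then some
vector `w` of the cycle space has positive inner product with every such oriented cycle. -/
theorem edge_ordering_is_geometric (ι : E → V × V)
    (hconn : Conn ι Set.univ)
    (F : Finset E) (h : ℕ) (ord : Fin h → E) (hinj : Function.Injective ord)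
    (hrange : Set.range ord = {e | e ∉ F})
    (hF : ∀ C : E → ℤ, IsCycleVec ι C → ∃ i, C (ord i) ≠ 0) :
    ∃ w : EuclideanSpace ℝ E, w ∈ cycleSpace ι ∧
      ∀ C : E → ℤ, IsCycleVec ι C →
        (∀ i : Fin h, C (ord i) ≠ 0 → (∀ j : Fin h, j < i → C (ord j) = 0) →
          C (ord i) = 1) →
        0 < ∑ e : E, (C e : ℝ) * w e :=
  edge_ordering_is_geometric_general ι h ord hF
end

section
/- Let 𝔠 be an acyclic cycle orientation configuration on a finite connected graph G (no nontrivial nonnegative integer combination of the oriented cycle vectors is zero). Then in each cycle reversal class of orientations of G there is at most one 𝔠-faithful orientation, i.e., two distinct orientations in the same cycle reversal class cannot both have all of their directed cycles oriented as prescribed by 𝔠. -/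
/-!
If `σ` and `σ'` lie in one cycle reversal class, then `σ' = σ - 2x` where `x` is a sum of cycle
vectors; on its support `x` agrees with `σ` and with `-σ'`. Following the edges of such a nonzero
`±1`-valued circulation in their prescribed direction until a vertex repeats yields a cycle vector
`C` agreeing with `x` on its support. Then `C` is a directed cycle of `σ` and `-C` one of `σ'`, so
if both orientations were faithful, `𝔠` would contain both orientations of one cycle.
Loops need separate care: a single loop is not a cycle vector, but the loops at each vertex carry
even total weight in `x`, so if `x` lives on loops only, two loops at one vertex form a cycle.
-/

open scoped Classical

set_option linter.unusedSectionVars false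

variable {V E : Type} [Fintype V] [Fintype E] [DecidableEq V] [DecidableEq E]

/-- An orientation of `G`, recorded as a sign for each edge relative to the reference
orientation `ι`. -/
def IsOrient (σ : E → ℤ) : Prop := ∀ e, σ e = 1 ∨ σ e = -1

/-- `C` is a directed cycle of the orientation `σ`. -/
def DirCycle (ι : E → V × V) (σ : E → ℤ) (C : E → ℤ) : Prop :=
  IsCycleVec ι C ∧ ∀ e, C e ≠ 0 → C e = σ e

/-- One cycle reversal step: reverse all edges of a directed cycle of `σ`. -/
def RevStep (ι : E → V × V) (σ τ : E → ℤ) : Prop :=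
  ∃ C : E → ℤ, DirCycle ι σ C ∧ ∀ e, τ e = if C e ≠ 0 then -σ e else σ e

/-- A cycle orientation configuration: a choice, for each cycle of `G`, of exactly one of
its two orientations. -/
def IsConfig (ι : E → V × V) (𝔠 : Set (E → ℤ)) : Prop :=
  (∀ C ∈ 𝔠, IsCycleVec ι C) ∧
  (∀ C : E → ℤ, IsCycleVec ι C → (C ∈ 𝔠 ↔ (fun e => -C e) ∉ 𝔠))

/-- Acyclicity of a configuration: no nontrivial nonnegative integer combination of its
oriented cycle vectors vanishes. -/
def ConfigAcyclic (𝔠 : Set (E → ℤ)) : Prop :=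
  ∀ (k : ℕ) (Cs : Fin k → E → ℤ) (n : Fin k → ℕ),
    (∀ i, Cs i ∈ 𝔠) → (∀ e, ∑ i, (n i : ℤ) * Cs i e = 0) → ∀ i, n i = 0

/-- `σ` is `𝔠`-faithful: every directed cycle of `σ` is oriented as prescribed by `𝔠`. -/
def Faithful (ι : E → V × V) (𝔠 : Set (E → ℤ)) (σ : E → ℤ) : Prop :=
  ∀ C : E → ℤ, DirCycle ι σ C → C ∈ 𝔠

open Finset Function

def boundary (ι : E → V × V) (x : E → ℤ) (v : V) : ℤ :=
  ∑ e, x e * ((if (ι e).2 = v then 1 else 0) - (if (ι e).1 = v then 1 else 0))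

def loopSum (ι : E → V × V) (x : E → ℤ) (v : V) : ℤ :=
  ∑ e ∈ univ.filter (fun e => ι e = (v, v)), x e

/-- Cycles in the sense of `IsCycleVec` cannot consist of a single loop (a vertex meets
`0` or `2` of their edges), so the cycle space they generate carries even weight on the loops
at each vertex. -/
def IsCirculation (ι : E → V × V) (x : E → ℤ) : Prop :=
  (∀ v, boundary ι x v = 0) ∧ ∀ v, Even (loopSum ι x v)

lemma ReachIn.symm {ι : E → V × V} {A : Set E} {a b : V} (h : ReachIn ι A a b) :
    ReachIn ι A b a :=
  Relation.ReflTransGen.mono (fun _ _ ⟨e, he, hι⟩ => ⟨e, he, hι.symm⟩) _ _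
    (Relation.ReflTransGen.swap _ _ h)

section IsCycleVec

variable {ι : E → V × V} {C : E → ℤ}

lemma IsCycleVec.neg (hC : IsCycleVec ι C) : IsCycleVec ι (fun e => -C e) := by
  obtain ⟨hval, ⟨e, he⟩, hbd, hdeg, hconn⟩ := hC
  simp only [IsCycleVec, ne_eq, neg_eq_zero, neg_mul, sum_neg_distrib]
  refine ⟨fun e => ?_, ⟨e, he⟩, hbd, hdeg, hconn⟩
  rcases hval e with h | h | h <;> simp [h]

/-- Modulo 2 the boundary at `v` counts the support edges at `v`, except that loops at `v`
are counted twice. -/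
lemma IsCycleVec.even_loopSum (hC : IsCycleVec ι C) (v : V) : Even (loopSum ι C v) := by
  obtain ⟨hval, -, hbd, hdeg, -⟩ := hC
  have hterm : ∀ e, ((C e * ((if (ι e).2 = v then 1 else 0) -
      (if (ι e).1 = v then 1 else 0)) : ℤ) : ZMod 2) =
      (if C e ≠ 0 ∧ ((ι e).1 = v ∨ (ι e).2 = v) then 1 else 0) +
      ((if ι e = (v, v) then C e else 0 : ℤ) : ZMod 2) := by
    intro e
    rcases hval e with h | h | h <;> by_cases h1 : (ι e).1 = v <;>
      by_cases h2 : (ι e).2 = v <;> simp [h, h1, h2, Prod.ext_iff] <;> decide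
  have h2 := congrArg (Int.cast : ℤ → ZMod 2) (hbd v)
  push_cast [hterm, sum_add_distrib, ← natCast_card_filter] at h2
  rw [loopSum, sum_filter, ← ZMod.intCast_eq_zero_iff_even]
  rcases hdeg v with h | h <;> rw [h] at h2 <;> simpa [show (2 : ZMod 2) = 0 from rfl] using h2

lemma IsCycleVec.isCirculation (hC : IsCycleVec ι C) : IsCirculation ι C :=
  ⟨hC.2.2.1, hC.even_loopSum⟩

end IsCycleVec

section Circulation

variable {ι : E → V × V}

lemma isCirculation_zero : IsCirculation ι 0 :=
  ⟨fun v => by simp [boundary], fun v => by simp [loopSum]⟩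

lemma IsCirculation.add {x y : E → ℤ} (hx : IsCirculation ι x) (hy : IsCirculation ι y) :
    IsCirculation ι (x + y) := by
  refine ⟨fun v => ?_, fun v => ?_⟩
  · have hxv := hx.1 v
    have hyv := hy.1 v
    simp only [boundary, Pi.add_apply, add_mul, sum_add_distrib] at hxv hyv ⊢
    rw [hxv, hyv, add_zero]
  · simpa only [loopSum, Pi.add_apply, sum_add_distrib] using (hx.2 v).add (hy.2 v)

lemma RevStep.exists_eq_sub_two_mul {σ τ : E → ℤ} (h : RevStep ι σ τ) :
    ∃ C, IsCycleVec ι C ∧ ∀ e, τ e = σ e - 2 * C e := by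
  obtain ⟨C, ⟨hC, hCσ⟩, hτ⟩ := h
  refine ⟨C, hC, fun e => ?_⟩
  by_cases he : C e = 0
  · simp [hτ e, he]
  · rw [hτ e, if_pos he, ← hCσ e he]
    ring

lemma exists_isCirculation_of_reflTransGen {σ σ' : E → ℤ}
    (h : Relation.ReflTransGen (RevStep ι) σ σ') :
    ∃ x, IsCirculation ι x ∧ ∀ e, σ' e = σ e - 2 * x e := by
  induction h with
  | refl => exact ⟨0, isCirculation_zero, by simp⟩
  | tail _ hstep ih =>
    obtain ⟨x, hx, hσx⟩ := ih
    obtain ⟨C, hC, hτ⟩ := hstep.exists_eq_sub_two_mul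
    exact ⟨x + C, hx.add hC.isCirculation, fun e => by rw [hτ e, hσx e, Pi.add_apply]; ring⟩

end Circulation

lemma Function.exists_iterate_mem_periodicPts {α : Type*} [Finite α] (f : α → α) (x : α) :
    ∃ m, f^[m] x ∈ periodicPts f := by
  obtain ⟨a, b, hab, h⟩ := Finite.exists_ne_map_eq_of_infinite (f^[·] x)
  wlog hlt : a < b generalizing a b
  · exact this b a hab.symm h.symm (lt_of_le_of_ne (not_lt.mp hlt) hab.symm)
  refine ⟨a, mk_mem_periodicPts (Nat.sub_pos_of_lt hlt) ?_⟩
  change f^[b - a] (f^[a] x) = f^[a] x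
  rw [← iterate_add_apply, Nat.sub_add_cancel hlt.le]
  exact h.symm

def Traverses (ι : E → V × V) (y : E → ℤ) (e : E) (a b : V) : Prop :=
  (y e = 1 ∧ ι e = (a, b)) ∨ (y e = -1 ∧ ι e = (b, a))

section Traverses

variable {ι : E → V × V} {y : E → ℤ} {e : E} {a b : V}

lemma exists_traverses (he : y e = 1 ∨ y e = -1) : ∃ a b, Traverses ι y e a b := by
  rcases he with h | h
  exacts [⟨_, _, Or.inl ⟨h, rfl⟩⟩, ⟨_, _, Or.inr ⟨h, rfl⟩⟩]

namespace Traverses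

lemma ne_zero (h : Traverses ι y e a b) : y e ≠ 0 := by
  rcases h with ⟨h, -⟩ | ⟨h, -⟩ <;> simp [h]

lemma left_unique {a' b' : V} (h : Traverses ι y e a b) (h' : Traverses ι y e a' b') :
    a = a' := by
  rcases h with ⟨hy, hι⟩ | ⟨hy, hι⟩ <;> rcases h' with ⟨hy', hι'⟩ | ⟨hy', hι'⟩ <;>
    simp_all [Prod.ext_iff]

lemma ne_of_fst_ne_snd (h : Traverses ι y e a b) (hne : (ι e).1 ≠ (ι e).2) : a ≠ b := by
  rcases h with ⟨-, hι⟩ | ⟨-, hι⟩ <;> rintro rfl <;> simp [hι] at hne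

lemma boundary_term (h : Traverses ι y e a b) (v : V) :
    y e * ((if (ι e).2 = v then 1 else 0) - (if (ι e).1 = v then 1 else 0)) =
      (if b = v then 1 else 0) - (if a = v then 1 else 0) := by
  rcases h with ⟨hy, hι⟩ | ⟨hy, hι⟩ <;> simp [hy, hι]

lemma incident_iff (h : Traverses ι y e a b) (v : V) :
    ((ι e).1 = v ∨ (ι e).2 = v) ↔ (a = v ∨ b = v) := by
  rcases h with ⟨-, hι⟩ | ⟨-, hι⟩ <;> simp [hι, or_comm]

lemma reachIn (h : Traverses ι y e a b) {A : Set E} (he : e ∈ A) : ReachIn ι A a b :=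
  Relation.ReflTransGen.single ⟨e, he, h.imp And.right And.right⟩

end Traverses

/-- Otherwise every term of the boundary at `v` is `≥ 0`, while the entering edge contributes `1`. -/
lemma exists_traverses_from (hy : ∀ e, y e = 0 ∨ y e = 1 ∨ y e = -1) {v : V}
    (hbd : boundary ι y v = 0) (hin : ∃ e a, Traverses ι y e a v) : ∃ e b, Traverses ι y e v b := by
  by_contra! hout
  have hterm : ∀ e a b, Traverses ι y e a b →
      y e * ((if (ι e).2 = v then 1 else 0) - (if (ι e).1 = v then 1 else 0)) =
        if b = v then 1 else 0 := by
    intro e a b h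
    have ha : a ≠ v := by rintro rfl; exact hout e b h
    simp [h.boundary_term, ha]
  obtain ⟨e₀, a₀, h₀⟩ := hin
  refine (sum_pos' (fun e _ => ?_) ⟨e₀, mem_univ _, by simp [hterm e₀ a₀ v h₀]⟩).ne' hbd
  rcases hy e with h | h
  · simp [h]
  · obtain ⟨a, b, hab⟩ := exists_traverses (ι := ι) h
    rw [hterm e a b hab]
    positivity

end Traverses

section SetIndicator

variable {y : E → ℤ} {s : Set E}

lemma indicator_signs (hy : ∀ e, y e = 0 ∨ y e = 1 ∨ y e = -1) (e : E) :
    s.indicator y e = 0 ∨ s.indicator y e = 1 ∨ s.indicator y e = -1 := by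
  rw [Set.indicator_apply]
  split_ifs
  exacts [hy e, Or.inl rfl]

lemma indicator_eq_of_ne_zero {e : E} (h : s.indicator y e ≠ 0) : s.indicator y e = y e :=
  Set.indicator_of_mem (Set.indicator_apply_ne_zero.1 h).1 y

end SetIndicator

structure IsCycleWalk (ι : E → V × V) (y : E → ℤ) (n : ℕ) (f : ℕ → V) (ε : ℕ → E) : Prop where
  pos : 0 < n
  closed : f n = f 0
  injOn : Set.InjOn f (Set.Iio n)
  traverses : ∀ k, Traverses ι y (ε k) (f k) (f (k + 1))
  loopless : ∀ k, f k ≠ f (k + 1)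

/-- Follow the sign of `y` out of each vertex; the walk is eventually periodic, and one period
is the cycle. -/
lemma exists_isCycleWalk {ι : E → V × V} {y : E → ℤ} (hy : ∀ e, y e = 0 ∨ y e = 1 ∨ y e = -1)
    (hbd : ∀ v, boundary ι y v = 0) (hloop : ∀ e, y e ≠ 0 → (ι e).1 ≠ (ι e).2) {e₀ : E}
    (he₀ : y e₀ ≠ 0) : ∃ n f ε, IsCycleWalk ι y n f ε := by
  have : Nonempty E := ⟨e₀⟩
  have : Nonempty V := ⟨(ι e₀).1⟩
  choose! out nxt hnxt using fun v => exists_traverses_from (v := v) hy (hbd v)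
  obtain ⟨a, b, hab⟩ := exists_traverses (ι := ι) ((hy e₀).resolve_left he₀)
  have horbit : ∀ k, ∃ e a, Traverses ι y e a (nxt^[k] b) := by
    intro k
    induction k with
    | zero => exact ⟨e₀, a, hab⟩
    | succ k ih => exact ⟨out _, _, iterate_succ_apply' nxt k b ▸ hnxt _ ih⟩
  obtain ⟨m, hm⟩ := exists_iterate_mem_periodicPts nxt b
  have htrav : ∀ k, Traverses ι y (out (nxt^[k] (nxt^[m] b))) (nxt^[k] (nxt^[m] b))
      (nxt^[k + 1] (nxt^[m] b)) := fun k => by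
    rw [iterate_succ_apply', ← iterate_add_apply]
    exact hnxt _ (horbit _)
  exact ⟨_, _, _, minimalPeriod_pos_of_mem_periodicPts hm, iterate_minimalPeriod,
    iterate_injOn_Iio_minimalPeriod, htrav,
    fun k => (htrav k).ne_of_fst_ne_snd (hloop _ (htrav k).ne_zero)⟩

namespace IsCycleWalk

variable {ι : E → V × V} {y : E → ℤ} {n : ℕ} {f : ℕ → V} {ε : ℕ → E}

lemma injOn_edge (hw : IsCycleWalk ι y n f ε) : Set.InjOn ε ↑(range n) := by
  intro k hk l hl h
  rw [coe_range] at hk hl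
  exact hw.injOn hk hl ((hw.traverses k).left_unique (h ▸ hw.traverses l))

lemma sum_comp_succ {M : Type*} [AddCancelCommMonoid M] (hw : IsCycleWalk ι y n f ε)
    (g : V → M) : ∑ k ∈ range n, g (f (k + 1)) = ∑ k ∈ range n, g (f k) := by
  apply add_right_cancel (b := g (f 0))
  rw [← sum_range_succ' (fun k => g (f k)), sum_range_succ, hw.closed]

lemma indicator_ne_zero_iff (hw : IsCycleWalk ι y n f ε) {e : E} :
    (↑((range n).image ε) : Set E).indicator y e ≠ 0 ↔ e ∈ (range n).image ε := by
  refine Set.indicator_apply_ne_zero.trans ⟨And.left, fun he => ⟨he, ?_⟩⟩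
  obtain ⟨k, -, rfl⟩ := mem_image.1 he
  exact (hw.traverses k).ne_zero

lemma boundary_indicator (hw : IsCycleWalk ι y n f ε) (v : V) :
    boundary ι ((↑((range n).image ε) : Set E).indicator y) v = 0 := by
  simp only [boundary, Set.indicator_apply, mem_coe, ite_mul, zero_mul, sum_ite_mem, univ_inter]
  rw [sum_image hw.injOn_edge]
  simp only [(hw.traverses _).boundary_term, sum_sub_distrib]
  exact sub_eq_zero.2 (hw.sum_comp_succ fun u => if u = v then 1 else 0)

lemma card_incident (hw : IsCycleWalk ι y n f ε) (v : V) :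
    #(univ.filter fun e => (↑((range n).image ε) : Set E).indicator y e ≠ 0 ∧
      ((ι e).1 = v ∨ (ι e).2 = v)) = 2 * #((range n).filter (f · = v)) := by
  have hfilter : (univ.filter fun e => (↑((range n).image ε) : Set E).indicator y e ≠ 0 ∧
      ((ι e).1 = v ∨ (ι e).2 = v)) = ((range n).filter fun k => f k = v ∨ f (k + 1) = v).image ε := by
    ext e
    simp only [mem_filter, mem_univ, true_and, hw.indicator_ne_zero_iff, mem_image]
    constructor
    · rintro ⟨⟨k, hk, rfl⟩, hv⟩
      exact ⟨k, ⟨hk, ((hw.traverses k).incident_iff v).1 hv⟩, rfl⟩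
    · rintro ⟨k, ⟨hk, hv⟩, rfl⟩
      exact ⟨⟨k, hk, rfl⟩, ((hw.traverses k).incident_iff v).2 hv⟩
  have hdisj : Disjoint ((range n).filter (f · = v)) ((range n).filter fun k => f (k + 1) = v) :=
    disjoint_filter.2 fun k _ h h' => hw.loopless k (h.trans h'.symm)
  have hshift : #((range n).filter fun k => f (k + 1) = v) = #((range n).filter (f · = v)) := by
    simp only [card_filter]
    exact hw.sum_comp_succ fun u => if u = v then 1 else 0
  rw [hfilter, card_image_of_injOn (hw.injOn_edge.mono (filter_subset _ _)), filter_or,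
    card_union_of_disjoint hdisj, hshift, two_mul]

lemma reachIn_indicator (hw : IsCycleWalk ι y n f ε) {k : ℕ} (hk : k ≤ n) :
    ReachIn ι {e | (↑((range n).image ε) : Set E).indicator y e ≠ 0} (f 0) (f k) := by
  induction k with
  | zero => exact Relation.ReflTransGen.refl
  | succ k ih =>
    refine (ih (by omega)).trans ((hw.traverses k).reachIn ?_)
    exact hw.indicator_ne_zero_iff.2 (mem_image_of_mem _ (mem_range.2 (by omega)))

lemma isCycleVec_indicator (hy : ∀ e, y e = 0 ∨ y e = 1 ∨ y e = -1)
    (hw : IsCycleWalk ι y n f ε) : IsCycleVec ι ((↑((range n).image ε) : Set E).indicator y) := by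
  refine ⟨indicator_signs hy, ⟨ε 0, hw.indicator_ne_zero_iff.2 (mem_image_of_mem _ (mem_range.2 hw.pos))⟩,
    hw.boundary_indicator, fun v => ?_, fun a b ha hb => ?_⟩
  · have hle : #((range n).filter (f · = v)) ≤ 1 :=
      card_le_one.2 fun k hk l hl => hw.injOn (by simpa using (mem_filter.1 hk).1)
        (by simpa using (mem_filter.1 hl).1) ((mem_filter.1 hk).2.trans (mem_filter.1 hl).2.symm)
    rw [hw.card_incident]
    omega
  · have hon : ∀ c, (∃ e, (↑((range n).image ε) : Set E).indicator y e ≠ 0 ∧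
        ((ι e).1 = c ∨ (ι e).2 = c)) → ∃ k ≤ n, f k = c := by
      rintro c ⟨e, he, hc⟩
      obtain ⟨k, hk, rfl⟩ := mem_image.1 (hw.indicator_ne_zero_iff.1 he)
      rcases ((hw.traverses k).incident_iff c).1 hc with h | h
      exacts [⟨k, (mem_range.1 hk).le, h⟩, ⟨k + 1, mem_range.1 hk, h⟩]
    obtain ⟨i, hi, rfl⟩ := hon a ha
    obtain ⟨j, hj, rfl⟩ := hon b hb
    exact (hw.reachIn_indicator hi).symm.trans (hw.reachIn_indicator hj)

end IsCycleWalk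

section Loops

variable {ι : E → V × V} {y : E → ℤ}

lemma boundary_indicator_not_loop (v : V) :
    boundary ι ({e | (ι e).1 ≠ (ι e).2}.indicator y) v = boundary ι y v := by
  refine sum_congr rfl fun e _ => ?_
  by_cases h : (ι e).1 = (ι e).2
  · simp [h]
  · simp [Set.indicator_of_mem (show e ∈ {e | (ι e).1 ≠ (ι e).2} from h)]

lemma isCycleVec_indicator_pair_of_loops (hy : ∀ e, y e = 0 ∨ y e = 1 ∨ y e = -1)
    {e₀ e₁ : E} (hne : e₀ ≠ e₁) {v : V} (h₀ : ι e₀ = (v, v)) (h₁ : ι e₁ = (v, v))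
    (hy₀ : y e₀ ≠ 0) (hy₁ : y e₁ ≠ 0) :
    IsCycleVec ι ((↑({e₀, e₁} : Finset E) : Set E).indicator y) := by
  have hsupp : ∀ e, (↑({e₀, e₁} : Finset E) : Set E).indicator y e ≠ 0 ↔ e = e₀ ∨ e = e₁ := by
    intro e
    rw [Set.indicator_apply_ne_zero]
    simp only [coe_insert, coe_singleton, Set.mem_inter_iff, Set.mem_insert_iff,
      Set.mem_singleton_iff, mem_support, and_iff_left_iff_imp]
    rintro (rfl | rfl) <;> assumption
  have hloop : ∀ e, (↑({e₀, e₁} : Finset E) : Set E).indicator y e ≠ 0 → ι e = (v, v) :=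
    fun e he => by rcases (hsupp e).1 he with rfl | rfl <;> assumption
  have hinc : ∀ e w, (↑({e₀, e₁} : Finset E) : Set E).indicator y e ≠ 0 →
      ((ι e).1 = w ∨ (ι e).2 = w) → w = v := by
    intro e w he hw
    rw [hloop e he] at hw
    exact (or_self_iff.1 hw).symm
  refine ⟨indicator_signs hy, ⟨e₀, (hsupp _).2 (Or.inl rfl)⟩, fun w => sum_eq_zero fun e _ => ?_,
    fun w => ?_, fun a b ⟨e, he, ha⟩ ⟨e', he', hb⟩ => ?_⟩
  · by_cases he : (↑({e₀, e₁} : Finset E) : Set E).indicator y e = 0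
    · rw [he, zero_mul]
    · simp [hloop e he]
  · by_cases hw : w = v
    · right
      subst hw
      convert card_pair hne
      ext e
      simp only [mem_filter, mem_univ, true_and, hsupp, mem_insert, mem_singleton,
        and_iff_left_iff_imp]
      rintro (rfl | rfl) <;> simp [h₀, h₁]
    · left
      exact card_eq_zero.2 (filter_eq_empty_iff.2 fun e _ ⟨he, hc⟩ => hw (hinc e w he hc))
  · rw [hinc e a he ha, hinc e' b he' hb]
    exact Relation.ReflTransGen.refl

end Loops

lemma IsCirculation.exists_isCycleVec {ι : E → V × V} {x : E → ℤ} (hx : IsCirculation ι x)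
    (hval : ∀ e, x e = 0 ∨ x e = 1 ∨ x e = -1) (hne : ∃ e, x e ≠ 0) :
    ∃ C, IsCycleVec ι C ∧ ∀ e, C e ≠ 0 → C e = x e := by
  by_cases hnl : ∃ e, x e ≠ 0 ∧ (ι e).1 ≠ (ι e).2
  · obtain ⟨e₀, hx₀, hl₀⟩ := hnl
    set y := {e | (ι e).1 ≠ (ι e).2}.indicator x
    have hyx : ∀ e, y e ≠ 0 → y e = x e ∧ (ι e).1 ≠ (ι e).2 := fun e he =>
      ⟨indicator_eq_of_ne_zero he, (Set.indicator_apply_ne_zero.1 he).1⟩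
    have hbd : ∀ v, boundary ι y v = 0 := fun v => (boundary_indicator_not_loop v).trans (hx.1 v)
    have hy₀ : y e₀ ≠ 0 := by simpa [y, Set.indicator_apply, hl₀] using hx₀
    obtain ⟨n, f, ε, hw⟩ :=
      exists_isCycleWalk (indicator_signs hval) hbd (fun e he => (hyx e he).2) hy₀
    refine ⟨_, hw.isCycleVec_indicator (indicator_signs hval), fun e he => ?_⟩
    have hCy := indicator_eq_of_ne_zero he
    exact hCy.trans (hyx e (by rwa [hCy] at he)).1
  · push Not at hnl
    obtain ⟨e₀, he₀⟩ := hne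
    set v := (ι e₀).1
    have h₀ : ι e₀ = (v, v) := Prod.ext rfl (hnl e₀ he₀).symm
    -- `x e₀` is odd, so the even total `loopSum ι x v` needs a second loop at `v`
    obtain ⟨e₁, hne, h₁, he₁⟩ : ∃ e₁, e₀ ≠ e₁ ∧ ι e₁ = (v, v) ∧ x e₁ ≠ 0 := by
      by_contra! h
      have hsum := hx.2 v
      rw [loopSum, sum_eq_single_of_mem e₀ (by simp [h₀])
        fun e he hne => h e (Ne.symm hne) (mem_filter.1 he).2] at hsum
      rcases hval e₀ with h | h | h <;> simp_all [Int.not_even_one]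
    exact ⟨_, isCycleVec_indicator_pair_of_loops hval hne h₀ h₁ he₀ he₁,
      fun e he => indicator_eq_of_ne_zero he⟩

theorem faithful_orientation_unique_general (ι : E → V × V)
    (𝔠 : Set (E → ℤ)) (hcfg : IsConfig ι 𝔠)
    (σ σ' : E → ℤ) (hσ : IsOrient σ) (hσ' : IsOrient σ')
    (hclass : Relation.ReflTransGen (RevStep ι) σ σ')
    (hf : Faithful ι 𝔠 σ) (hf' : Faithful ι 𝔠 σ') :
    σ = σ' := by
  obtain ⟨x, hx, hσx⟩ := exists_isCirculation_of_reflTransGen hclass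
  have hxσ : ∀ e, x e ≠ 0 → x e = σ e ∧ x e = -σ' e := fun e he => by
    have := hσx e
    rcases hσ e with h | h <;> rcases hσ' e with h' | h' <;> omega
  have hval : ∀ e, x e = 0 ∨ x e = 1 ∨ x e = -1 := fun e => by
    have := hσx e
    rcases hσ e with h | h <;> rcases hσ' e with h' | h' <;> omega
  by_contra hne
  obtain ⟨e₀, he₀⟩ := Function.ne_iff.1 hne
  obtain ⟨C, hC, hCx⟩ := hx.exists_isCycleVec hval ⟨e₀, fun h => he₀ (by have := hσx e₀; omega)⟩
  have hC𝔠 : C ∈ 𝔠 := hf C ⟨hC, fun e he => (hCx e he).trans (hxσ e (hCx e he ▸ he)).1⟩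
  have hC𝔠' : (fun e => -C e) ∈ 𝔠 := hf' _ ⟨hC.neg, fun e he => by
    have he' : C e ≠ 0 := neg_ne_zero.1 he
    show -C e = σ' e
    rw [hCx e he', (hxσ e (hCx e he' ▸ he')).2, neg_neg]⟩
  exact (hcfg.2 C hC).1 hC𝔠 hC𝔠'

/-- for an acyclic cycle orientation configuration `𝔠`, each cycle reversal
class contains at most one `𝔠`-faithful orientation. -/
theorem faithful_orientation_unique (ι : E → V × V) (hconn : Conn ι Set.univ)
    (𝔠 : Set (E → ℤ)) (hcfg : IsConfig ι 𝔠) (hacyc : ConfigAcyclic 𝔠)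
    (σ σ' : E → ℤ) (hσ : IsOrient σ) (hσ' : IsOrient σ')
    (hclass : Relation.ReflTransGen (RevStep ι) σ σ')
    (hf : Faithful ι 𝔠 σ) (hf' : Faithful ι 𝔠 σ') :
    σ = σ' :=
  faithful_orientation_unique_general ι 𝔠 hcfg σ σ' hσ hσ' hclass hf hf'
end
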